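/- For every λ > 0, the integral of x²·φ(x)·Φ(x/λ)² over the real line equals 1/4 + λ/(π(1+λ²)√(2+λ²)) + (1/(2π))·arctan(1/(λ√(2+λ²))). -/

import Mathlib

open Real MeasureTheory Filter Set

noncomputable def phi (x : ℝ) : ℝ := (1 / Real.sqrt (2 * Real.pi)) * Real.exp (-x ^ 2 / 2)

noncomputable def Phi (x : ℝ) : ℝ := ∫ t in Set.Iic x, phi t

/-!
Write `K a = ∫ x² φ(x) Φ(a x)² dx`, so that the integral is `K (1/λ)`. Differentiating under the
integral sign, `K' a = 2 ∫ x³ φ(x) φ(a x) Φ(a x) dx`. As `φ(x) φ(a x)` is a centred Gaussian up to a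
constant, one integration by parts moves the derivative onto `Φ(a x)` and leaves only Gaussian
moments, so `K'` is elementary. The right-hand side, read as a function of `a = 1/λ`, has the same
derivative and agrees with `K` at `a = 0`, where `Φ 0 = 1/2` gives `K 0 = 1/4`.
-/

lemma integrable_pow_mul_exp_neg_mul_sq (n : ℕ) {b : ℝ} (hb : 0 < b) :
    Integrable fun x : ℝ => x ^ n * exp (-b * x ^ 2) := by
  simpa [rpow_natCast] using
    integrable_rpow_mul_exp_neg_mul_sq hb (by linarith [n.cast_nonneg (α := ℝ)] : (-1 : ℝ) < n)

lemma integral_cube_mul_exp_neg_mul_sq_mul {b C C' : ℝ} (hb : 0 < b) {g g' : ℝ → ℝ}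
    (hg : ∀ x, HasDerivAt g (g' x) x) (hg' : Continuous g')
    (hgC : ∀ x, |g x| ≤ C) (hg'C : ∀ x, |g' x| ≤ C') :
    ∫ x, g x * (x ^ 3 * exp (-b * x ^ 2)) =
      ∫ x, g' x * ((x ^ 2 / (2 * b) + 1 / (2 * b ^ 2)) * exp (-b * x ^ 2)) := by
  have hv : ∀ x : ℝ,
      HasDerivAt (fun x => -(x ^ 2 / (2 * b) + 1 / (2 * b ^ 2)) * exp (-b * x ^ 2))
        (x ^ 3 * exp (-b * x ^ 2)) x := by
    intro x
    have hexp : HasDerivAt (fun x : ℝ => exp (-b * x ^ 2))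
        (exp (-b * x ^ 2) * (-b * (2 * x))) x := by
      simpa using ((hasDerivAt_pow 2 x).const_mul (-b)).exp
    refine ((((hasDerivAt_pow 2 x).div_const (2 * b)).add_const
      (1 / (2 * b ^ 2))).neg.mul hexp).congr_deriv ?_
    simp only [Pi.neg_apply]
    field_simp
    ring
  have hv_int :
      Integrable fun x : ℝ => -(x ^ 2 / (2 * b) + 1 / (2 * b ^ 2)) * exp (-b * x ^ 2) := by
    refine (((integrable_pow_mul_exp_neg_mul_sq 2 hb).div_const (2 * b)).add
      ((integrable_exp_neg_mul_sq hb).const_mul (1 / (2 * b ^ 2)))).neg.congr ?_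
    exact Eventually.of_forall fun x => by simp only [Pi.add_apply, Pi.neg_apply]; ring
  have hg_cont : Continuous g := continuous_iff_continuousAt.2 fun x => (hg x).continuousAt
  have key := integral_mul_deriv_eq_deriv_mul_of_integrable (fun x _ => hg x) (fun x _ => hv x)
    ((integrable_pow_mul_exp_neg_mul_sq 3 hb).bdd_mul hg_cont.aestronglyMeasurable
      (Eventually.of_forall hgC))
    (hv_int.bdd_mul hg'.aestronglyMeasurable (Eventually.of_forall hg'C))
    (hv_int.bdd_mul hg_cont.aestronglyMeasurable (Eventually.of_forall hgC))
  rw [key, ← integral_neg]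
  congr 1 with x
  ring

lemma integral_sq_mul_exp_neg_mul_sq {b : ℝ} (hb : 0 < b) :
    ∫ x : ℝ, x ^ 2 * exp (-b * x ^ 2) = √(π / b) / (2 * b) := by
  have hv : ∀ x : ℝ, HasDerivAt (fun x => -(1 / (2 * b)) * exp (-b * x ^ 2))
      (x * exp (-b * x ^ 2)) x := by
    intro x
    refine ((((hasDerivAt_pow 2 x).const_mul (-b)).exp).const_mul _).congr_deriv ?_
    field_simp
    ring
  have key := integral_mul_deriv_eq_deriv_mul_of_integrable (fun x _ => hasDerivAt_id x)
    (fun x _ => hv x) (integrable_pow_mul_exp_neg_mul_sq 2 hb |>.congr <|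
      Eventually.of_forall fun x => by simp only [Pi.mul_apply, id]; ring)
    ((integrable_exp_neg_mul_sq hb).const_mul (-(1 / (2 * b))) |>.congr <|
      Eventually.of_forall fun x => by simp only [Pi.mul_apply]; ring)
    ((integrable_mul_exp_neg_mul_sq hb).const_mul (-(1 / (2 * b))) |>.congr <|
      Eventually.of_forall fun x => by simp only [Pi.mul_apply, id]; ring)
  simp only [id, one_mul, ← mul_assoc, ← sq] at key
  rw [key, integral_const_mul, integral_gaussian]
  field_simp

lemma phi_eq (x : ℝ) : phi x = (√(2 * π))⁻¹ * exp (-(1 / 2) * x ^ 2) := by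
  rw [phi]; ring_nf

lemma phi_nonneg (x : ℝ) : 0 ≤ phi x := by
  rw [phi]; positivity

lemma phi_le (x : ℝ) : phi x ≤ (√(2 * π))⁻¹ := by
  rw [phi_eq]
  exact mul_le_of_le_one_right (by positivity) (exp_le_one_iff.2 (by nlinarith [sq_nonneg x]))

lemma phi_neg (x : ℝ) : phi (-x) = phi x := by
  simp [phi]

@[fun_prop]
lemma continuous_phi : Continuous phi := by
  rw [funext phi_eq]; fun_prop

lemma integrable_pow_mul_phi (n : ℕ) : Integrable fun x => x ^ n * phi x := by
  simp only [phi_eq, mul_left_comm _ (√(2 * π))⁻¹]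
  exact (integrable_pow_mul_exp_neg_mul_sq n (by norm_num)).const_mul _

lemma integrable_phi : Integrable phi := by
  simpa using integrable_pow_mul_phi 0

lemma integral_phi : ∫ x, phi x = 1 := by
  simp only [phi_eq]
  rw [integral_const_mul, integral_gaussian, show π / (1 / 2) = 2 * π by ring]
  exact inv_mul_cancel₀ (by positivity)

lemma integral_sq_mul_phi : ∫ x, x ^ 2 * phi x = 1 := by
  simp only [phi_eq, mul_left_comm _ (√(2 * π))⁻¹]
  rw [integral_const_mul, integral_sq_mul_exp_neg_mul_sq (by norm_num),
    show π / (1 / 2) = 2 * π by ring]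
  field_simp

lemma phi_mul_exp (a b x : ℝ) :
    phi (a * x) * exp (-b * x ^ 2) = (√(2 * π))⁻¹ * exp (-(b + a ^ 2 / 2) * x ^ 2) := by
  rw [phi_eq, mul_assoc, ← exp_add]
  ring_nf

lemma phi_mul_phi (a x : ℝ) :
    phi x * phi (a * x) = (2 * π)⁻¹ * exp (-((1 + a ^ 2) / 2) * x ^ 2) := by
  rw [phi_eq x, mul_assoc, mul_comm (exp _), phi_mul_exp, ← mul_assoc, ← mul_inv,
    mul_self_sqrt (by positivity)]
  ring_nf

lemma Phi_nonneg (x : ℝ) : 0 ≤ Phi x :=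
  setIntegral_nonneg measurableSet_Iic fun t _ => phi_nonneg t

lemma Phi_le_one (x : ℝ) : Phi x ≤ 1 :=
  integral_phi ▸ setIntegral_le_integral integrable_phi (Eventually.of_forall phi_nonneg)

lemma abs_Phi_le_one (x : ℝ) : |Phi x| ≤ 1 :=
  abs_le.2 ⟨by linarith [Phi_nonneg x], Phi_le_one x⟩

lemma hasDerivAt_Phi (x : ℝ) : HasDerivAt Phi (phi x) x := by
  have hPhi : ∀ y, Phi y = Phi 0 + ∫ t in (0 : ℝ)..y, phi t := fun y => by
    rw [← intervalIntegral.integral_Iic_sub_Iic integrable_phi.integrableOn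
      integrable_phi.integrableOn, Phi, Phi]
    ring
  refine (HasDerivAt.const_add _ ?_).congr_of_eventuallyEq (Eventually.of_forall hPhi)
  exact intervalIntegral.integral_hasDerivAt_right integrable_phi.intervalIntegrable
    continuous_phi.aestronglyMeasurable.stronglyMeasurableAtFilter continuous_phi.continuousAt

lemma hasDerivAt_Phi_mul (a x : ℝ) : HasDerivAt (fun x => Phi (a * x)) (phi (a * x) * a) x :=
  (hasDerivAt_Phi (a * x)).comp x (by simpa using (hasDerivAt_id x).const_mul a)

@[fun_prop]
lemma continuous_Phi : Continuous Phi :=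
  continuous_iff_continuousAt.2 fun x => (hasDerivAt_Phi x).continuousAt

lemma Phi_zero : Phi 0 = 1 / 2 := by
  have hsymm : ∫ x in Iic (0 : ℝ), phi x = ∫ x in Ioi (0 : ℝ), phi x := by
    simpa [phi_neg] using integral_comp_neg_Iic (0 : ℝ) phi
  have htotal := intervalIntegral.integral_Iic_add_Ioi (b := 0) integrable_phi.integrableOn
    integrable_phi.integrableOn
  rw [integral_phi] at htotal
  rw [Phi]
  linarith

noncomputable def K (a : ℝ) : ℝ := ∫ x, x ^ 2 * phi x * Phi (a * x) ^ 2

noncomputable def derivK (a : ℝ) : ℝ :=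
  a / π * (1 / ((1 + a ^ 2) * (1 + 2 * a ^ 2) * √(1 + 2 * a ^ 2))
    + 2 / ((1 + a ^ 2) ^ 2 * √(1 + 2 * a ^ 2)))

lemma integral_cube_mul_phi_mul_phi_mul_Phi (a : ℝ) :
    ∫ x, 2 * x ^ 3 * phi x * phi (a * x) * Phi (a * x) = derivK a := by
  rw [derivK]
  set c := 1 + a ^ 2
  set b := 1 + 2 * a ^ 2
  have hc : 0 < c := by positivity
  have hb : 0 < b := by positivity
  have hparts := integral_cube_mul_exp_neg_mul_sq_mul (half_pos hc) (hasDerivAt_Phi_mul a)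
    (by fun_prop) (C := 1) (C' := (√(2 * π))⁻¹ * |a|) (fun x => abs_Phi_le_one _) (fun x => by
      rw [abs_mul, abs_of_nonneg (phi_nonneg _)]
      exact mul_le_mul_of_nonneg_right (phi_le _) (abs_nonneg a))
  have hβ : c / 2 + a ^ 2 / 2 = b / 2 := by ring
  calc ∫ x, 2 * x ^ 3 * phi x * phi (a * x) * Phi (a * x)
      = π⁻¹ * ∫ x, Phi (a * x) * (x ^ 3 * exp (-(c / 2) * x ^ 2)) := by
        rw [← integral_const_mul]
        congr 1 with x
        rw [mul_assoc _ (phi x), phi_mul_phi]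
        field_simp
        ring
    _ = π⁻¹ * ∫ x, (a * (√(2 * π))⁻¹ / c) * (x ^ 2 * exp (-(b / 2) * x ^ 2))
          + (2 * a * (√(2 * π))⁻¹ / c ^ 2) * exp (-(b / 2) * x ^ 2) := by
        rw [hparts]
        congr 2 with x
        rw [show ∀ P, phi (a * x) * a * (P * exp (-(c / 2) * x ^ 2))
          = a * P * (phi (a * x) * exp (-(c / 2) * x ^ 2)) from fun P => by ring, phi_mul_exp, hβ]
        field_simp
    _ = a / π * (1 / (c * b * √b) + 2 / (c ^ 2 * √b)) := by
        rw [integral_add ((integrable_pow_mul_exp_neg_mul_sq 2 (half_pos hb)).const_mul _)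
          ((integrable_exp_neg_mul_sq (half_pos hb)).const_mul _), integral_const_mul,
          integral_const_mul, integral_sq_mul_exp_neg_mul_sq (half_pos hb), integral_gaussian,
          show π / (b / 2) = 2 * π / b by field_simp, sqrt_div' _ hb.le]
        have : 0 < √(2 * π) := by positivity
        have : 0 < √b := sqrt_pos.2 hb
        field_simp

lemma hasDerivAt_sq_mul_phi_mul_Phi_sq (x a : ℝ) :
    HasDerivAt (fun a => x ^ 2 * phi x * Phi (a * x) ^ 2)
      (2 * x ^ 3 * phi x * phi (a * x) * Phi (a * x)) a := by
  have hPhi : HasDerivAt (fun a => Phi (a * x)) (phi (a * x) * x) a := by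
    simpa only [mul_comm _ x] using hasDerivAt_Phi_mul x a
  refine ((hPhi.pow 2).const_mul (x ^ 2 * phi x)).congr_deriv ?_
  ring

lemma integrable_sq_mul_phi_mul_Phi_sq (a : ℝ) :
    Integrable fun x => x ^ 2 * phi x * Phi (a * x) ^ 2 :=
  (integrable_pow_mul_phi 2).mul_bdd (c := 1)
    (by fun_prop : Continuous fun x => Phi (a * x) ^ 2).aestronglyMeasurable
    (Eventually.of_forall fun x => by
      simpa [abs_pow] using pow_le_one₀ (n := 2) (abs_nonneg _) (abs_Phi_le_one (a * x)))

lemma hasDerivAt_K (a : ℝ) : HasDerivAt K (derivK a) a := by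
  rw [← integral_cube_mul_phi_mul_phi_mul_Phi]
  refine (hasDerivAt_integral_of_dominated_loc_of_deriv_le (Metric.ball_mem_nhds a one_pos)
    (Eventually.of_forall fun a => (integrable_sq_mul_phi_mul_Phi_sq a).aestronglyMeasurable)
    (integrable_sq_mul_phi_mul_Phi_sq a) ?_ ?_
    ((integrable_pow_mul_phi 3).abs.const_mul (2 * (√(2 * π))⁻¹))
    (Eventually.of_forall fun x a _ => hasDerivAt_sq_mul_phi_mul_Phi_sq x a)).2
  · exact (by fun_prop : Continuous fun x => 2 * x ^ 3 * phi x * phi (a * x) * Phi (a * x))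
      |>.aestronglyMeasurable
  · refine Eventually.of_forall fun x a _ => ?_
    have h : |phi (a * x) * Phi (a * x)| ≤ (√(2 * π))⁻¹ := by
      rw [abs_mul, abs_of_nonneg (phi_nonneg _)]
      exact (mul_le_of_le_one_right (phi_nonneg _) (abs_Phi_le_one _)).trans (phi_le _)
    rw [norm_eq_abs, show 2 * x ^ 3 * phi x * phi (a * x) * Phi (a * x)
      = 2 * (phi (a * x) * Phi (a * x)) * (x ^ 3 * phi x) by ring, abs_mul, abs_mul, abs_two]
    gcongr

noncomputable def closedFormK (a : ℝ) : ℝ :=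
  1 / 4 + a ^ 2 / (π * (1 + a ^ 2) * √(1 + 2 * a ^ 2))
    + 1 / (2 * π) * arctan (a ^ 2 / √(1 + 2 * a ^ 2))

lemma hasDerivAt_sqrt_one_add_two_mul_sq (a : ℝ) :
    HasDerivAt (fun a => √(1 + 2 * a ^ 2)) (2 * a / √(1 + 2 * a ^ 2)) a := by
  have h := (((hasDerivAt_pow 2 a).const_mul 2).const_add 1).sqrt (by positivity)
  refine h.congr_deriv ?_
  field_simp
  ring

lemma hasDerivAt_sq_div_mul_sqrt (a : ℝ) :
    HasDerivAt (fun a => a ^ 2 / (π * (1 + a ^ 2) * √(1 + 2 * a ^ 2)))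
      (2 * a * (1 + a ^ 2 - a ^ 4) /
        (π * (1 + a ^ 2) ^ 2 * (1 + 2 * a ^ 2) * √(1 + 2 * a ^ 2))) a := by
  have hs : 0 < √(1 + 2 * a ^ 2) := by positivity
  have hss := sq_sqrt (by positivity : (0 : ℝ) ≤ 1 + 2 * a ^ 2)
  have h := (hasDerivAt_pow 2 a).div
    ((((hasDerivAt_pow 2 a).const_add 1).const_mul π).mul (hasDerivAt_sqrt_one_add_two_mul_sq a))
    (by simp only [Pi.mul_apply]; positivity)
  refine h.congr_deriv ?_
  simp only [Pi.mul_apply]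
  set s := √(1 + 2 * a ^ 2)
  field_simp
  linear_combination 2 * a ^ 3 * (1 + a ^ 2) * hss

lemma hasDerivAt_arctan_sq_div_sqrt (a : ℝ) :
    HasDerivAt (fun a => arctan (a ^ 2 / √(1 + 2 * a ^ 2)))
      (2 * a / ((1 + a ^ 2) * √(1 + 2 * a ^ 2))) a := by
  have hs : 0 < √(1 + 2 * a ^ 2) := by positivity
  have hss := sq_sqrt (by positivity : (0 : ℝ) ≤ 1 + 2 * a ^ 2)
  have h := ((hasDerivAt_pow 2 a).div (hasDerivAt_sqrt_one_add_two_mul_sq a) hs.ne').arctan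
  refine h.congr_deriv ?_
  simp only [Pi.div_apply]
  set s := √(1 + 2 * a ^ 2)
  field_simp
  linear_combination 2 * a ^ 3 * hss

lemma hasDerivAt_closedFormK (a : ℝ) : HasDerivAt closedFormK (derivK a) a := by
  refine (((hasDerivAt_sq_div_mul_sqrt a).const_add (1 / 4)).add
    ((hasDerivAt_arctan_sq_div_sqrt a).const_mul (1 / (2 * π)))).congr_deriv ?_
  rw [derivK]
  field_simp
  ring

lemma K_zero : K 0 = 1 / 4 := by
  simp only [K, zero_mul, Phi_zero]
  rw [integral_mul_const, integral_sq_mul_phi]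
  norm_num

lemma K_eq_closedFormK : K = closedFormK := by
  refine eq_of_fderiv_eq (𝕜 := ℝ) (fun a => (hasDerivAt_K a).differentiableAt)
    (fun a => (hasDerivAt_closedFormK a).differentiableAt) (fun a => ?_) 0 ?_
  · rw [(hasDerivAt_K a).hasFDerivAt.fderiv, (hasDerivAt_closedFormK a).hasFDerivAt.fderiv]
  · rw [K_zero, closedFormK]
    norm_num

lemma closedFormK_one_div {lam : ℝ} (hlam : 0 < lam) :
    closedFormK (1 / lam) =
      1 / 4 + lam / (π * (1 + lam ^ 2) * √(2 + lam ^ 2)) +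
        1 / (2 * π) * arctan (1 / (lam * √(2 + lam ^ 2))) := by
  have hsqrt : √(1 + 2 * (1 / lam) ^ 2) = √(2 + lam ^ 2) / lam := by
    rw [show 1 + 2 * (1 / lam) ^ 2 = (2 + lam ^ 2) / lam ^ 2 by field_simp; ring,
      sqrt_div' _ (sq_nonneg lam), sqrt_sq hlam.le]
  have : 0 < √(2 + lam ^ 2) := by positivity
  rw [closedFormK, hsqrt]
  congr 2
  · field_simp
    ring
  · congr 1
    field_simp

theorem stmt4 (lam : ℝ) (hlam : 0 < lam) :
    ∫ x : ℝ, x ^ 2 * phi x * (Phi (x / lam)) ^ 2 =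
      1 / 4 + lam / (Real.pi * (1 + lam ^ 2) * Real.sqrt (2 + lam ^ 2)) +
        (1 / (2 * Real.pi)) * Real.arctan (1 / (lam * Real.sqrt (2 + lam ^ 2))) := by
  have hK : ∫ x : ℝ, x ^ 2 * phi x * Phi (x / lam) ^ 2 = K (1 / lam) := by
    simp only [K, one_div_mul_eq_div]
  rw [hK, K_eq_closedFormK, closedFormK_one_div hlam]
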